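/- Define g(ψ) = [1 + √(2π) ψ Φ(ψ) exp(ψ²/2)]^{-1} for ψ ≥ 0, where Φ is the standard normal CDF. Then g is continuous and strictly decreasing on [0,∞), g(0) = 1, and g(ψ) → 0 as ψ → ∞; hence for every α ∈ (0,1] there is a unique ψ ≥ 0 with g(ψ) = α. -/

import Mathlib

open Filter Set

noncomputable def stdNormalCDF (ψ : ℝ) : ℝ :=
  ∫ x in Set.Iic ψ, (Real.sqrt (2 * Real.pi))⁻¹ * Real.exp (-x ^ 2 / 2)

noncomputable def halfinWhitt (ψ : ℝ) : ℝ :=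
  (1 + Real.sqrt (2 * Real.pi) * ψ * stdNormalCDF ψ * Real.exp (ψ ^ 2 / 2))⁻¹

/-! The standard normal CDF `Φ` has the positive Gaussian density as derivative, so it is
continuous, positive and strictly increasing. Hence the denominator
`1 + √(2π) ψ Φ(ψ) exp(ψ²/2)` is continuous, equals `1` at `0`, is strictly increasing on
`[0, ∞)` as a product of nonnegative nondecreasing factors one of which (`ψ`) is strictly
increasing, and grows at least like `√(2π) Φ(0) ψ`. Its inverse `g` is therefore continuous,
strictly decreasing, `g 0 = 1` and `g → 0`; the intermediate value theorem and injectivity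
give the unique root. -/

open Real MeasureTheory ProbabilityTheory Topology

theorem StrictAntiOn.existsUnique_eq_of_tendsto_atTop {α β : Type*}
    [ConditionallyCompleteLinearOrder α] [DenselyOrdered α] [TopologicalSpace α]
    [OrderTopology α] [LinearOrder β] [TopologicalSpace β] [OrderClosedTopology β]
    {f : α → β} {a : α} {b y : β} (hanti : StrictAntiOn f (Ici a))
    (hcont : ContinuousOn f (Ici a)) (hlim : Tendsto f atTop (𝓝 b)) (hby : b < y)
    (hya : y ≤ f a) :
    ∃! x, a ≤ x ∧ f x = y := by
  obtain ⟨c, hfc, hac⟩ := ((hlim.eventually_lt_const hby).and (eventually_ge_atTop a)).exists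
  obtain ⟨x, ⟨hax, -⟩, hfx⟩ :=
    intermediate_value_Icc' hac (hcont.mono Icc_subset_Ici_self) ⟨hfc.le, hya⟩
  exact ⟨x, ⟨hax, hfx⟩, fun x' ⟨hax', hfx'⟩ ↦
    hanti.injOn hax' hax (hfx'.trans hfx.symm)⟩

lemma stdNormalCDF_eq_setIntegral_gaussianPDFReal (ψ : ℝ) :
    stdNormalCDF ψ = ∫ x in Iic ψ, gaussianPDFReal 0 1 x := by
  simp [stdNormalCDF, gaussianPDFReal]

lemma stdNormalCDF_sub_stdNormalCDF (a b : ℝ) :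
    stdNormalCDF b - stdNormalCDF a = ∫ x in a..b, gaussianPDFReal 0 1 x := by
  simp only [stdNormalCDF_eq_setIntegral_gaussianPDFReal]
  exact intervalIntegral.integral_Iic_sub_Iic (integrable_gaussianPDFReal 0 1).integrableOn
    (integrable_gaussianPDFReal 0 1).integrableOn

lemma hasDerivAt_stdNormalCDF (ψ : ℝ) :
    HasDerivAt stdNormalCDF (gaussianPDFReal 0 1 ψ) ψ := by
  have hcont : Continuous (gaussianPDFReal 0 1) := by
    unfold gaussianPDFReal
    fun_prop
  have hF : HasDerivAt (fun u ↦ stdNormalCDF 0 + ∫ x in (0 : ℝ)..u, gaussianPDFReal 0 1 x)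
      (gaussianPDFReal 0 1 ψ) ψ :=
    (hcont.integral_hasStrictDerivAt 0 ψ).hasDerivAt.const_add _
  refine hF.congr_of_eventuallyEq (Eventually.of_forall fun u ↦ ?_)
  simp only [← stdNormalCDF_sub_stdNormalCDF, add_sub_cancel]

lemma continuous_stdNormalCDF : Continuous stdNormalCDF :=
  continuous_iff_continuousAt.2 fun ψ ↦ (hasDerivAt_stdNormalCDF ψ).continuousAt

lemma strictMono_stdNormalCDF : StrictMono stdNormalCDF :=
  strictMono_of_hasDerivAt_pos hasDerivAt_stdNormalCDF
    fun ψ ↦ gaussianPDFReal_pos 0 1 ψ one_ne_zero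

lemma stdNormalCDF_pos (ψ : ℝ) : 0 < stdNormalCDF ψ := by
  have hnonneg : 0 ≤ stdNormalCDF (ψ - 1) :=
    setIntegral_nonneg measurableSet_Iic fun x _ ↦ by positivity
  exact hnonneg.trans_lt (strictMono_stdNormalCDF (sub_one_lt ψ))

noncomputable def halfinWhittDenom (ψ : ℝ) : ℝ :=
  1 + √(2 * π) * ψ * stdNormalCDF ψ * exp (ψ ^ 2 / 2)

lemma halfinWhitt_eq_inv_halfinWhittDenom (ψ : ℝ) :
    halfinWhitt ψ = (halfinWhittDenom ψ)⁻¹ :=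
  rfl

lemma halfinWhittDenom_zero : halfinWhittDenom 0 = 1 := by
  simp [halfinWhittDenom]

lemma continuous_halfinWhittDenom : Continuous halfinWhittDenom := by
  have := continuous_stdNormalCDF
  unfold halfinWhittDenom
  fun_prop

lemma strictMonoOn_halfinWhittDenom : StrictMonoOn halfinWhittDenom (Ici 0) := by
  intro a (ha : 0 ≤ a) b (hb : 0 ≤ b) hab
  have hΦa := stdNormalCDF_pos a
  have hΦab := strictMono_stdNormalCDF hab
  unfold halfinWhittDenom
  gcongr

lemma one_le_halfinWhittDenom {ψ : ℝ} (hψ : 0 ≤ ψ) : 1 ≤ halfinWhittDenom ψ :=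
  halfinWhittDenom_zero ▸ strictMonoOn_halfinWhittDenom.monotoneOn self_mem_Ici hψ hψ

lemma tendsto_halfinWhittDenom_atTop : Tendsto halfinWhittDenom atTop atTop := by
  have hc : 0 < √(2 * π) * stdNormalCDF 0 := mul_pos (by positivity) (stdNormalCDF_pos 0)
  refine tendsto_atTop_mono' atTop ?_
    (tendsto_atTop_add_const_left _ 1 (tendsto_id.const_mul_atTop hc))
  filter_upwards [eventually_ge_atTop 0] with ψ hψ
  have hΦ : stdNormalCDF 0 ≤ stdNormalCDF ψ := strictMono_stdNormalCDF.monotone hψ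
  have hexp : 1 ≤ exp (ψ ^ 2 / 2) := one_le_exp (by positivity)
  have hΦψ := stdNormalCDF_pos ψ
  unfold halfinWhittDenom
  calc 1 + √(2 * π) * stdNormalCDF 0 * id ψ = 1 + √(2 * π) * ψ * stdNormalCDF 0 * 1 := by
        rw [id]; ring
    _ ≤ _ := by gcongr

theorem halfinWhitt_properties :
    ContinuousOn halfinWhitt (Set.Ici 0) ∧
    StrictAntiOn halfinWhitt (Set.Ici 0) ∧
    halfinWhitt 0 = 1 ∧
    Tendsto halfinWhitt atTop (nhds 0) ∧
    ∀ α : ℝ, 0 < α → α ≤ 1 → ∃! ψ : ℝ, 0 ≤ ψ ∧ halfinWhitt ψ = α := by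
  have hpos : ∀ ψ ∈ Ici (0 : ℝ), 0 < halfinWhittDenom ψ :=
    fun ψ hψ ↦ one_pos.trans_le (one_le_halfinWhittDenom hψ)
  have hcont : ContinuousOn halfinWhitt (Ici 0) :=
    continuous_halfinWhittDenom.continuousOn.inv₀ fun ψ hψ ↦ (hpos ψ hψ).ne'
  have hanti : StrictAntiOn halfinWhitt (Ici 0) := fun a ha b hb hab ↦
    inv_strictAnti₀ (hpos a ha) (strictMonoOn_halfinWhittDenom ha hb hab)
  have hzero : halfinWhitt 0 = 1 := by
    rw [halfinWhitt_eq_inv_halfinWhittDenom, halfinWhittDenom_zero, inv_one]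
  have hlim : Tendsto halfinWhitt atTop (𝓝 0) := tendsto_halfinWhittDenom_atTop.inv_tendsto_atTop
  exact ⟨hcont, hanti, hzero, hlim, fun α hα hα₁ ↦
    hanti.existsUnique_eq_of_tendsto_atTop hcont hlim hα (hzero ▸ hα₁)⟩
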